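/- Let φ be an LTL formula in negation normal form and w an infinite word over 2^Ap. For every X ⊆ μ(φ) and Y ⊆ ν(φ): if w ⊨ GF(ψ[Y]_μ) for every ψ ∈ X, and w ⊨ FG(ψ[X]_ν) for every ψ ∈ Y, then X ⊆ GF_w and Y ⊆ FG_w. -/

import Mathlib

/-- LTL formulas in negation normal form over atomic propositions `Ap`. -/
inductive LTL (Ap : Type) : Type
  | tt : LTL Ap
  | ff : LTL Ap
  | atom (a : Ap) : LTL Ap
  | natom (a : Ap) : LTL Ap
  | conj (φ ψ : LTL Ap) : LTL Ap
  | disj (φ ψ : LTL Ap) : LTL Ap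
  | next (φ : LTL Ap) : LTL Ap
  | fut (φ : LTL Ap) : LTL Ap
  | glob (φ : LTL Ap) : LTL Ap
  | untl (φ ψ : LTL Ap) : LTL Ap
  | wUntl (φ ψ : LTL Ap) : LTL Ap
  | strongRel (φ ψ : LTL Ap) : LTL Ap
  | rel (φ ψ : LTL Ap) : LTL Ap

variable {Ap : Type} [DecidableEq Ap]

/-- The suffix `w_i` of an infinite word. -/
def suffix (w : ℕ → Finset Ap) (i : ℕ) : ℕ → Finset Ap := fun k => w (i + k)

/-- Standard LTL satisfaction over infinite words over `2^Ap`. -/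
def Sat : (ℕ → Finset Ap) → LTL Ap → Prop
  | _, .tt => True
  | _, .ff => False
  | w, .atom a => a ∈ w 0
  | w, .natom a => a ∉ w 0
  | w, .conj φ ψ => Sat w φ ∧ Sat w ψ
  | w, .disj φ ψ => Sat w φ ∨ Sat w ψ
  | w, .next φ => Sat (suffix w 1) φ
  | w, .fut φ => ∃ k, Sat (suffix w k) φ
  | w, .glob φ => ∀ k, Sat (suffix w k) φ
  | w, .untl φ ψ => ∃ k, Sat (suffix w k) ψ ∧ ∀ j < k, Sat (suffix w j) φ
  | w, .wUntl φ ψ =>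
      (∀ k, Sat (suffix w k) φ) ∨ (∃ k, Sat (suffix w k) ψ ∧ ∀ j < k, Sat (suffix w j) φ)
  | w, .strongRel φ ψ => ∃ k, Sat (suffix w k) φ ∧ ∀ j ≤ k, Sat (suffix w j) ψ
  | w, .rel φ ψ =>
      (∀ k, Sat (suffix w k) ψ) ∨ (∃ k, Sat (suffix w k) φ ∧ ∀ j ≤ k, Sat (suffix w j) ψ)

/-- The "after" function on a single letter `ν ∈ 2^Ap`. -/
def afLetter : LTL Ap → Finset Ap → LTL Ap
  | .tt, _ => .tt
  | .ff, _ => .ff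
  | .atom a, ν => if a ∈ ν then .tt else .ff
  | .natom a, ν => if a ∈ ν then .ff else .tt
  | .conj φ ψ, ν => .conj (afLetter φ ν) (afLetter ψ ν)
  | .disj φ ψ, ν => .disj (afLetter φ ν) (afLetter ψ ν)
  | .next φ, _ => φ
  | .fut φ, ν => .disj (afLetter φ ν) (.fut φ)
  | .glob φ, ν => .conj (afLetter φ ν) (.glob φ)
  | .untl φ ψ, ν => .disj (afLetter ψ ν) (.conj (afLetter φ ν) (.untl φ ψ))
  | .wUntl φ ψ, ν => .disj (afLetter ψ ν) (.conj (afLetter φ ν) (.wUntl φ ψ))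
  | .strongRel φ ψ, ν => .conj (afLetter ψ ν) (.disj (afLetter φ ν) (.strongRel φ ψ))
  | .rel φ ψ, ν => .conj (afLetter ψ ν) (.disj (afLetter φ ν) (.rel φ ψ))

/-- The "after" function extended to finite words. -/
def af : LTL Ap → List (Finset Ap) → LTL Ap
  | φ, [] => φ
  | φ, ν :: u => af (afLetter φ ν) u

/-- The finite prefix `w_{0i} = w[0]⋯w[i-1]` of an infinite word. -/
def prefixWord (w : ℕ → Finset Ap) (i : ℕ) : List (Finset Ap) :=
  (List.range i).map w

/-- The finite infix `w_{ij} = w[i]⋯w[j-1]` of an infinite word. -/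
def infixWord (w : ℕ → Finset Ap) (i j : ℕ) : List (Finset Ap) :=
  (List.range (j - i)).map (fun k => w (i + k))

/-- Evaluation of a formula as a propositional formula, where every maximal
proper subformula (root not `∧`/`∨`) is treated as a propositional variable
whose truth value is given by the assignment `v`. -/
def propEval (v : LTL Ap → Prop) : LTL Ap → Prop
  | .tt => True
  | .ff => False
  | .conj φ ψ => propEval v φ ∧ propEval v ψ
  | .disj φ ψ => propEval v φ ∨ propEval v ψ
  | φ => v φ

/-- Propositional equivalence `φ ≡_P ψ`. -/
def propEquiv (φ ψ : LTL Ap) : Prop := ∀ v, propEval v φ ↔ propEval v ψ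

/-- The set of subformulas of a formula (including itself). -/
def subf : LTL Ap → Set (LTL Ap)
  | .tt => {LTL.tt}
  | .ff => {LTL.ff}
  | .atom a => {LTL.atom a}
  | .natom a => {LTL.natom a}
  | .conj φ ψ => insert (.conj φ ψ) (subf φ ∪ subf ψ)
  | .disj φ ψ => insert (.disj φ ψ) (subf φ ∪ subf ψ)
  | .next φ => insert (.next φ) (subf φ)
  | .fut φ => insert (.fut φ) (subf φ)
  | .glob φ => insert (.glob φ) (subf φ)
  | .untl φ ψ => insert (.untl φ ψ) (subf φ ∪ subf ψ)
  | .wUntl φ ψ => insert (.wUntl φ ψ) (subf φ ∪ subf ψ)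
  | .strongRel φ ψ => insert (.strongRel φ ψ) (subf φ ∪ subf ψ)
  | .rel φ ψ => insert (.rel φ ψ) (subf φ ∪ subf ψ)

/-- A formula is proper if its root is not a conjunction or a disjunction. -/
def isProper : LTL Ap → Prop
  | .conj _ _ => False
  | .disj _ _ => False
  | _ => True

/-- The set of proper subformulas of `φ`. -/
def properSubf (φ : LTL Ap) : Set (LTL Ap) := {ψ | ψ ∈ subf φ ∧ isProper ψ}

/-- Formulas whose root is a least-fixed-point operator (`F`, `U`, `M`). -/
def isMu : LTL Ap → Prop
  | .fut _ => True
  | .untl _ _ => True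
  | .strongRel _ _ => True
  | _ => False

/-- Formulas whose root is a greatest-fixed-point operator (`G`, `W`, `R`). -/
def isNu : LTL Ap → Prop
  | .glob _ => True
  | .wUntl _ _ => True
  | .rel _ _ => True
  | _ => False

/-- `μ(φ)`: subformulas of `φ` of the form `Fψ`, `ψ₁Uψ₂`, `ψ₁Mψ₂`. -/
def muSet (φ : LTL Ap) : Set (LTL Ap) := {ψ | ψ ∈ subf φ ∧ isMu ψ}

/-- `ν(φ)`: subformulas of `φ` of the form `Gψ`, `ψ₁Wψ₂`, `ψ₁Rψ₂`. -/
def nuSet (φ : LTL Ap) : Set (LTL Ap) := {ψ | ψ ∈ subf φ ∧ isNu ψ}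

/-- `GF_w = {ψ ∈ μ(φ) | w ⊨ GFψ}`. -/
def GFSet (φ : LTL Ap) (w : ℕ → Finset Ap) : Set (LTL Ap) :=
  {ψ | ψ ∈ muSet φ ∧ Sat w (.glob (.fut ψ))}

/-- `F_w = {ψ ∈ μ(φ) | w ⊨ Fψ}`. -/
def FSet (φ : LTL Ap) (w : ℕ → Finset Ap) : Set (LTL Ap) :=
  {ψ | ψ ∈ muSet φ ∧ Sat w (.fut ψ)}

/-- `FG_w = {ψ ∈ ν(φ) | w ⊨ FGψ}`. -/
def FGSet (φ : LTL Ap) (w : ℕ → Finset Ap) : Set (LTL Ap) :=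
  {ψ | ψ ∈ nuSet φ ∧ Sat w (.fut (.glob ψ))}

/-- `G_w = {ψ ∈ ν(φ) | w ⊨ Gψ}`. -/
def GSet (φ : LTL Ap) (w : ℕ → Finset Ap) : Set (LTL Ap) :=
  {ψ | ψ ∈ nuSet φ ∧ Sat w (.glob ψ)}

open scoped Classical in
/-- `φ[X]_ν`. -/
noncomputable def evalNu (X : Set (LTL Ap)) : LTL Ap → LTL Ap
  | .tt => .tt
  | .ff => .ff
  | .atom a => .atom a
  | .natom a => .natom a
  | .conj φ ψ => .conj (evalNu X φ) (evalNu X ψ)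
  | .disj φ ψ => .disj (evalNu X φ) (evalNu X ψ)
  | .next φ => .next (evalNu X φ)
  | .glob φ => .glob (evalNu X φ)
  | .wUntl φ ψ => .wUntl (evalNu X φ) (evalNu X ψ)
  | .rel φ ψ => .rel (evalNu X φ) (evalNu X ψ)
  | .fut φ => if LTL.fut φ ∈ X then .tt else .ff
  | .untl φ ψ => if LTL.untl φ ψ ∈ X then .wUntl (evalNu X φ) (evalNu X ψ) else .ff
  | .strongRel φ ψ => if LTL.strongRel φ ψ ∈ X then .rel (evalNu X φ) (evalNu X ψ) else .ff

open scoped Classical in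
/-- `φ[Y]_μ`. -/
noncomputable def evalMu (Y : Set (LTL Ap)) : LTL Ap → LTL Ap
  | .tt => .tt
  | .ff => .ff
  | .atom a => .atom a
  | .natom a => .natom a
  | .conj φ ψ => .conj (evalMu Y φ) (evalMu Y ψ)
  | .disj φ ψ => .disj (evalMu Y φ) (evalMu Y ψ)
  | .next φ => .next (evalMu Y φ)
  | .fut φ => .fut (evalMu Y φ)
  | .untl φ ψ => .untl (evalMu Y φ) (evalMu Y ψ)
  | .strongRel φ ψ => .strongRel (evalMu Y φ) (evalMu Y ψ)
  | .glob φ => if LTL.glob φ ∈ Y then .tt else .ff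
  | .wUntl φ ψ => if LTL.wUntl φ ψ ∈ Y then .tt else .untl (evalMu Y φ) (evalMu Y ψ)
  | .rel φ ψ => if LTL.rel φ ψ ∈ Y then .tt else .strongRel (evalMu Y φ) (evalMu Y ψ)

/-- Concatenation `u·w` of a finite word and an infinite word. -/
def wordAppend (u : List (Finset Ap)) (w : ℕ → Finset Ap) : ℕ → Finset Ap :=
  fun i => if h : i < u.length then u.get ⟨i, h⟩ else w (i - u.length)

/-- The smallest set of formulas containing `tt`, `ff` and all elements of `S`
that is closed under conjunction and disjunction. -/
inductive PosBool (S : Set (LTL Ap)) : LTL Ap → Prop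
  | tt : PosBool S .tt
  | ff : PosBool S .ff
  | base {ψ : LTL Ap} : ψ ∈ S → PosBool S ψ
  | conj {φ ψ : LTL Ap} : PosBool S φ → PosBool S ψ → PosBool S (.conj φ ψ)
  | disj {φ ψ : LTL Ap} : PosBool S φ → PosBool S ψ → PosBool S (.disj φ ψ)

/-- `Reach(φ)`: the set of `≡_P`-equivalence classes of the formulas `af(φ,u)`
over all finite words `u`. -/
def Reach (φ : LTL Ap) : Set (Set (LTL Ap)) :=
  {C | ∃ u : List (Finset Ap), C = {ψ | propEquiv ψ (af φ u)}}

/-- The fragment `μLTL`: only `tt`, `ff`, literals, `∧`, `∨`, `X`, `F`, `U`, `M`. -/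
def inMuLTL : LTL Ap → Prop
  | .tt => True
  | .ff => True
  | .atom _ => True
  | .natom _ => True
  | .conj φ ψ => inMuLTL φ ∧ inMuLTL ψ
  | .disj φ ψ => inMuLTL φ ∧ inMuLTL ψ
  | .next φ => inMuLTL φ
  | .fut φ => inMuLTL φ
  | .untl φ ψ => inMuLTL φ ∧ inMuLTL ψ
  | .strongRel φ ψ => inMuLTL φ ∧ inMuLTL ψ
  | .glob _ => False
  | .wUntl _ _ => False
  | .rel _ _ => False

/-- The fragment `νLTL`: only `tt`, `ff`, literals, `∧`, `∨`, `X`, `G`, `W`, `R`. -/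
def inNuLTL : LTL Ap → Prop
  | .tt => True
  | .ff => True
  | .atom _ => True
  | .natom _ => True
  | .conj φ ψ => inNuLTL φ ∧ inNuLTL ψ
  | .disj φ ψ => inNuLTL φ ∧ inNuLTL ψ
  | .next φ => inNuLTL φ
  | .glob φ => inNuLTL φ
  | .wUntl φ ψ => inNuLTL φ ∧ inNuLTL ψ
  | .rel φ ψ => inNuLTL φ ∧ inNuLTL ψ
  | .fut _ => False
  | .untl _ _ => False
  | .strongRel _ _ => False

/-!
Induction on the size of `ψ`, proving `ψ ∈ X → w ⊨ GF ψ` and `ψ ∈ Y → w ⊨ FG ψ` together.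
Only the members of `Y` (resp. `X`) that are subformulas of `ψ` influence `ψ[Y]_μ`
(resp. `ψ[X]_ν`), and since `X` holds μ- and `Y` holds ν-formulas, these are proper
subformulas, covered by the induction hypothesis. For `ψ ∈ X`, the finitely many relevant
members of `Y` all hold globally from some point on, and on such suffixes `ψ[Y]_μ` implies `ψ`;
as `ψ[Y]_μ` holds infinitely often, so does `ψ`. For `ψ ∈ Y`, the relevant members of `X`
hold infinitely often on every suffix, where `ψ[X]_ν` then implies `ψ`; so `FG ψ[X]_ν`
gives `FG ψ`.
-/

omit [DecidableEq Ap]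

open Filter

theorem suffix_suffix (w : ℕ → Finset Ap) (i j : ℕ) :
    suffix (suffix w i) j = suffix w (i + j) := by
  funext k; simp [suffix, Nat.add_assoc]

theorem suffix_zero (w : ℕ → Finset Ap) : suffix w 0 = w := by
  funext k; simp [suffix]

variable {w : ℕ → Finset Ap}

theorem sat_glob_suffix {χ : LTL Ap} (h : Sat w (.glob χ)) (n : ℕ) :
    Sat (suffix w n) (.glob χ) := fun k => by
  rw [suffix_suffix]; exact h (n + k)

theorem sat_of_sat_glob {χ : LTL Ap} (h : Sat w (.glob χ)) : Sat w χ := by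
  simpa [suffix_zero] using h 0

theorem sat_glob_fut_iff_frequently {χ : LTL Ap} :
    Sat w (.glob (.fut χ)) ↔ ∃ᶠ n in atTop, Sat (suffix w n) χ := by
  simp only [Sat, suffix_suffix, frequently_atTop]
  exact ⟨fun h k => let ⟨m, hm⟩ := h k; ⟨k + m, by omega, hm⟩,
    fun h k => let ⟨n, hkn, hn⟩ := h k; ⟨n - k, by rwa [Nat.add_sub_cancel' hkn]⟩⟩

theorem sat_fut_glob_iff_eventually {χ : LTL Ap} :
    Sat w (.fut (.glob χ)) ↔ ∀ᶠ n in atTop, Sat (suffix w n) (.glob χ) := by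
  simp only [Sat, suffix_suffix, eventually_atTop]
  exact ⟨fun ⟨i, hi⟩ => ⟨i, fun n hn k => by
      rw [show n + k = i + (n - i + k) by omega]; exact hi _⟩,
    fun ⟨i, hi⟩ => ⟨i, fun k => by simpa using hi i le_rfl k⟩⟩

namespace LTL

theorem eq_or_sizeOf_lt_of_mem_subf {χ ψ : LTL Ap} (h : χ ∈ subf ψ) :
    χ = ψ ∨ sizeOf χ < sizeOf ψ := by
  induction ψ <;>
    simp only [subf, Set.mem_insert_iff, Set.mem_union, Set.mem_singleton_iff] at h <;> grind

theorem sizeOf_lt_of_mem_subf {χ ψ : LTL Ap} (h : χ ∈ subf ψ) (hne : χ ≠ ψ) :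
    sizeOf χ < sizeOf ψ :=
  (eq_or_sizeOf_lt_of_mem_subf h).resolve_left hne

theorem subf_finite (ψ : LTL Ap) : (subf ψ).Finite := by
  induction ψ <;> simp_all [subf]

end LTL

theorem evalMu_congr {Y Y' : Set (LTL Ap)} {ψ : LTL Ap}
    (h : ∀ χ ∈ subf ψ, χ ∈ Y ↔ χ ∈ Y') : evalMu Y ψ = evalMu Y' ψ := by
  induction ψ <;> simp_all [evalMu, subf] <;> split_ifs <;> simp_all

theorem evalNu_congr {X X' : Set (LTL Ap)} {ψ : LTL Ap}
    (h : ∀ χ ∈ subf ψ, χ ∈ X ↔ χ ∈ X') : evalNu X ψ = evalNu X' ψ := by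
  induction ψ <;> simp_all [evalNu, subf] <;> split_ifs <;> simp_all

theorem sat_of_sat_evalMu {Y : Set (LTL Ap)} (hY : ∀ χ ∈ Y, Sat w (.glob χ)) {ψ : LTL Ap}
    (h : Sat w (evalMu Y ψ)) : Sat w ψ := by
  induction ψ generalizing w with
  | tt | ff | atom | natom => exact h
  | conj _ _ ih₁ ih₂ => exact ⟨ih₁ hY h.1, ih₂ hY h.2⟩
  | disj _ _ ih₁ ih₂ => exact h.imp (ih₁ hY) (ih₂ hY)
  | next _ ih => exact ih (fun χ hχ => sat_glob_suffix (hY χ hχ) 1) h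
  | fut _ ih =>
    obtain ⟨k, hk⟩ := h
    exact ⟨k, ih (fun χ hχ => sat_glob_suffix (hY χ hχ) k) hk⟩
  | untl _ _ ih₁ ih₂ =>
    obtain ⟨k, hk, hlt⟩ := h
    exact ⟨k, ih₂ (fun χ hχ => sat_glob_suffix (hY χ hχ) k) hk,
      fun j hj => ih₁ (fun χ hχ => sat_glob_suffix (hY χ hχ) j) (hlt j hj)⟩
  | strongRel _ _ ih₁ ih₂ =>
    obtain ⟨k, hk, hle⟩ := h
    exact ⟨k, ih₁ (fun χ hχ => sat_glob_suffix (hY χ hχ) k) hk,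
      fun j hj => ih₂ (fun χ hχ => sat_glob_suffix (hY χ hχ) j) (hle j hj)⟩
  | glob φ =>
    by_cases hmem : LTL.glob φ ∈ Y
    · exact sat_of_sat_glob (hY _ hmem)
    · simp [evalMu, hmem, Sat] at h
  | wUntl φ₁ φ₂ ih₁ ih₂ =>
    by_cases hmem : LTL.wUntl φ₁ φ₂ ∈ Y
    · exact sat_of_sat_glob (hY _ hmem)
    · simp only [evalMu, hmem, if_false] at h
      obtain ⟨k, hk, hlt⟩ := h
      exact Or.inr ⟨k, ih₂ (fun χ hχ => sat_glob_suffix (hY χ hχ) k) hk,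
        fun j hj => ih₁ (fun χ hχ => sat_glob_suffix (hY χ hχ) j) (hlt j hj)⟩
  | rel φ₁ φ₂ ih₁ ih₂ =>
    by_cases hmem : LTL.rel φ₁ φ₂ ∈ Y
    · exact sat_of_sat_glob (hY _ hmem)
    · simp only [evalMu, hmem, if_false] at h
      obtain ⟨k, hk, hle⟩ := h
      exact Or.inr ⟨k, ih₁ (fun χ hχ => sat_glob_suffix (hY χ hχ) k) hk,
        fun j hj => ih₂ (fun χ hχ => sat_glob_suffix (hY χ hχ) j) (hle j hj)⟩

theorem sat_of_sat_evalNu {X : Set (LTL Ap)} (hX : ∀ χ ∈ X, Sat w (.glob (.fut χ)))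
    {ψ : LTL Ap} (h : Sat w (evalNu X ψ)) : Sat w ψ := by
  induction ψ generalizing w with
  | tt | ff | atom | natom => exact h
  | conj _ _ ih₁ ih₂ => exact ⟨ih₁ hX h.1, ih₂ hX h.2⟩
  | disj _ _ ih₁ ih₂ => exact h.imp (ih₁ hX) (ih₂ hX)
  | next _ ih => exact ih (fun χ hχ => sat_glob_suffix (hX χ hχ) 1) h
  | glob _ ih => exact fun k => ih (fun χ hχ => sat_glob_suffix (hX χ hχ) k) (h k)
  | wUntl _ _ ih₁ ih₂ =>
    refine h.imp (fun hall k => ih₁ (fun χ hχ => sat_glob_suffix (hX χ hχ) k) (hall k)) ?_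
    rintro ⟨k, hk, hlt⟩
    exact ⟨k, ih₂ (fun χ hχ => sat_glob_suffix (hX χ hχ) k) hk,
      fun j hj => ih₁ (fun χ hχ => sat_glob_suffix (hX χ hχ) j) (hlt j hj)⟩
  | rel _ _ ih₁ ih₂ =>
    refine h.imp (fun hall k => ih₂ (fun χ hχ => sat_glob_suffix (hX χ hχ) k) (hall k)) ?_
    rintro ⟨k, hk, hle⟩
    exact ⟨k, ih₁ (fun χ hχ => sat_glob_suffix (hX χ hχ) k) hk,
      fun j hj => ih₂ (fun χ hχ => sat_glob_suffix (hX χ hχ) j) (hle j hj)⟩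
  | fut φ =>
    by_cases hmem : LTL.fut φ ∈ X
    · obtain ⟨m, j, hj⟩ := sat_of_sat_glob (hX _ hmem)
      exact ⟨m + j, by rwa [suffix_suffix] at hj⟩
    · simp [evalNu, hmem, Sat] at h
  | untl φ₁ φ₂ ih₁ ih₂ =>
    by_cases hmem : LTL.untl φ₁ φ₂ ∈ X
    · simp only [evalNu, hmem, if_true] at h
      rcases h with hall | ⟨k, hk, hlt⟩
      · -- `φ₂` holds somewhere since `φ₁ U φ₂` holds infinitely often
        obtain ⟨m, j, hj, -⟩ := sat_of_sat_glob (hX _ hmem)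
        rw [suffix_suffix] at hj
        exact ⟨m + j, hj, fun i _ => ih₁ (fun χ hχ => sat_glob_suffix (hX χ hχ) i) (hall i)⟩
      · exact ⟨k, ih₂ (fun χ hχ => sat_glob_suffix (hX χ hχ) k) hk,
          fun j hj => ih₁ (fun χ hχ => sat_glob_suffix (hX χ hχ) j) (hlt j hj)⟩
    · simp [evalNu, hmem, Sat] at h
  | strongRel φ₁ φ₂ ih₁ ih₂ =>
    by_cases hmem : LTL.strongRel φ₁ φ₂ ∈ X
    · simp only [evalNu, hmem, if_true] at h
      rcases h with hall | ⟨k, hk, hle⟩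
      · obtain ⟨m, j, hj, -⟩ := sat_of_sat_glob (hX _ hmem)
        rw [suffix_suffix] at hj
        exact ⟨m + j, hj, fun i _ => ih₂ (fun χ hχ => sat_glob_suffix (hX χ hχ) i) (hall i)⟩
      · exact ⟨k, ih₁ (fun χ hχ => sat_glob_suffix (hX χ hχ) k) hk,
          fun j hj => ih₂ (fun χ hχ => sat_glob_suffix (hX χ hχ) j) (hle j hj)⟩
    · simp [evalNu, hmem, Sat] at h

theorem not_isNu_of_isMu {ψ : LTL Ap} (h : isMu ψ) : ¬isNu ψ := by
  cases ψ <;> simp_all [isMu, isNu]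

section RelyGuarantee

variable {X Y : Set (LTL Ap)} (hX : ∀ ψ ∈ X, isMu ψ) (hY : ∀ ψ ∈ Y, isNu ψ)
  (hXY : ∀ ψ ∈ X, Sat w (.glob (.fut (evalMu Y ψ))))
  (hYX : ∀ ψ ∈ Y, Sat w (.fut (.glob (evalNu X ψ))))
include hX hY hXY hYX

theorem sat_glob_fut_and_sat_fut_glob_of_mem (ψ : LTL Ap) :
    (ψ ∈ X → Sat w (.glob (.fut ψ))) ∧ (ψ ∈ Y → Sat w (.fut (.glob ψ))) := by
  induction ψ using (measure (sizeOf : LTL Ap → ℕ)).wf.induction with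
  | h ψ ih =>
    refine ⟨fun hψ => ?_, fun hψ => ?_⟩
    · let Y' := {χ | χ ∈ Y ∧ χ ∈ subf ψ}
      have hG : ∀ᶠ n in atTop, ∀ χ ∈ Y', Sat (suffix w n) (.glob χ) := by
        refine (eventually_all_finite ((LTL.subf_finite ψ).subset fun _ hχ => hχ.2)).2 ?_
        intro χ ⟨hχY, hχψ⟩
        have hlt := LTL.sizeOf_lt_of_mem_subf hχψ fun h =>
          not_isNu_of_isMu (hX ψ hψ) (h ▸ hY χ hχY)
        exact sat_fut_glob_iff_eventually.1 ((ih χ hlt).2 hχY)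
      have hF : ∃ᶠ n in atTop, Sat (suffix w n) (evalMu Y' ψ) := by
        have := sat_glob_fut_iff_frequently.1 (hXY ψ hψ)
        rwa [evalMu_congr (Y' := Y') fun χ hχ => by simp [Y', hχ]] at this
      exact sat_glob_fut_iff_frequently.2
        ((hF.and_eventually hG).mono fun _ hn => sat_of_sat_evalMu hn.2 hn.1)
    · let X' := {χ | χ ∈ X ∧ χ ∈ subf ψ}
      have hGF : ∀ χ ∈ X', Sat w (.glob (.fut χ)) := fun χ ⟨hχX, hχψ⟩ => by
        have hlt := LTL.sizeOf_lt_of_mem_subf hχψ fun h =>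
          not_isNu_of_isMu (hX χ hχX) (h ▸ hY ψ hψ)
        exact (ih χ hlt).1 hχX
      obtain ⟨i, hi⟩ := hYX ψ hψ
      rw [evalNu_congr (X' := X') fun χ hχ => by simp [X', hχ]] at hi
      exact ⟨i, fun k => sat_of_sat_evalNu
        (fun χ hχ => sat_glob_suffix (sat_glob_suffix (hGF χ hχ) i) k) (hi k)⟩

end RelyGuarantee

theorem stmt16_general {Ap : Type}
    (φ : LTL Ap) (w : ℕ → Finset Ap) (X Y : Set (LTL Ap))
    (hX : X ⊆ muSet φ) (hY : Y ⊆ nuSet φ)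
    (h1 : ∀ ψ ∈ X, Sat w (LTL.glob (LTL.fut (evalMu Y ψ))))
    (h2 : ∀ ψ ∈ Y, Sat w (LTL.fut (LTL.glob (evalNu X ψ)))) :
    X ⊆ GFSet φ w ∧ Y ⊆ FGSet φ w := by
  have key := sat_glob_fut_and_sat_fut_glob_of_mem (fun ψ hψ => (hX hψ).2)
    (fun ψ hψ => (hY hψ).2) h1 h2
  exact ⟨fun ψ hψ => ⟨hX hψ, (key ψ).1 hψ⟩, fun ψ hψ => ⟨hY hψ, (key ψ).2 hψ⟩⟩

/-- soundness of the mutual rely/guarantee check: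
if `w ⊨ GF(ψ[Y]_μ)` for all `ψ ∈ X` and `w ⊨ FG(ψ[X]_ν)` for all `ψ ∈ Y`,
then `X ⊆ GF_w` and `Y ⊆ FG_w`. -/
theorem stmt16 {Ap : Type} [DecidableEq Ap] [Fintype Ap]
    (φ : LTL Ap) (w : ℕ → Finset Ap) (X Y : Set (LTL Ap))
    (hX : X ⊆ muSet φ) (hY : Y ⊆ nuSet φ)
    (h1 : ∀ ψ ∈ X, Sat w (LTL.glob (LTL.fut (evalMu Y ψ))))
    (h2 : ∀ ψ ∈ Y, Sat w (LTL.fut (LTL.glob (evalNu X ψ)))) :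
    X ⊆ GFSet φ w ∧ Y ⊆ FGSet φ w :=
  stmt16_general φ w X Y hX hY h1 h2
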